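/- arXiv:0705.4080 — 2 statements merged into one kernel-verified Lean document; each statement's English description precedes it below -/
import Mathlib

section
/- Let σ : A → A^+ be an aperiodic substitution on a finite alphabet. Then there exists M > 0 such that every word W ∈ L(X_σ) with |W| ≥ M contains at least one letter from A_l. -/
/-!
Call the letters outside `A_l` short. As `σ` is nonerasing, `|σ^m(a)|` is monotone in `m`, so there
is one `K` with `|σ^m(a)| ≤ K` for every short `a` and every `m`; and all letters of `σ^m(a)` are
short when `a` is.

A short word inside `σ^n(a) = σ^{n-1}(σ(a))` either lies inside one `σ^{n-1}(b)`, or consists of a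
suffix of some `σ^{n-1}(b)`, the images of at most `|σ(a)|` short letters, and a prefix of some
`σ^{n-1}(b')`; reversing `σ` turns prefixes into suffixes, so it is enough to bound short suffixes.
Let `T(b) = shortTailLetters σ b`. A short suffix of `σ^n(b)` is a short suffix of `σ^{n-1}(d)`
followed by the images of the letters after `d` in `σ(b)`, which are short; then `T(d) ⊆ T(b)`,
and `d ∈ T(b)` if there are such letters. So unless some `c` lies in `T(c)`, `T` shrinks strictly
each time the suffix gains a nonempty block, and the suffix has length at most
`1 + |A| · max |σ(a)| · K`.

If `c ∈ T(c)`, i.e. `σ^q(c)` ends with `c u` for a nonempty short `u`, then `σ^{kq}(c)` ends with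
`c u σ^q(u) ⋯ σ^{(k-1)q}(u)`. The words `σ^{iq}(u)` have bounded length, so this sequence is
eventually periodic and some nonempty `D` has all its powers in `L(σ)`; the periodic point
`⋯DDD⋯` then lies in `X_σ`, contradicting aperiodicity.
-/

open Filter Topology

namespace PaperStmt

variable {A : Type*} {B : Type*}

/-- Apply a substitution (letter-to-word map) to a word, by concatenation. -/
def substWord (σ : B → List A) (w : List B) : List A := w.flatMap σ

/-- `σ^n` applied to a word. -/
def substIter (σ : A → List A) (n : ℕ) (w : List A) : List A := (substWord σ)^[n] w

/-- `σ^n(a)` for a letter `a`. -/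
def substPow (σ : A → List A) (n : ℕ) (a : A) : List A := substIter σ n [a]

/-- The language of a substitution: factors of some `σ^n(a)`, `n ≥ 1`. -/
def Lang (σ : A → List A) : Set (List A) :=
  {w | ∃ a : A, ∃ n : ℕ, 1 ≤ n ∧ w <:+: substIter σ n [a]}

/-- The word `x[i], x[i+1], …, x[i+len-1]` read in a bi-infinite sequence. -/
def seg (x : ℤ → A) (i : ℤ) (len : ℕ) : List A :=
  (List.range len).map fun k => x (i + k)

/-- The phase space `X_σ` of the substitutional dynamical system. -/
def Xsub (σ : A → List A) : Set (ℤ → A) :=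
  {x | ∀ n : ℕ, seg x (-(n : ℤ)) (2 * n + 1) ∈ Lang σ}

/-- `L(X_σ)`: all finite words occurring in elements of `X_σ`. -/
def LangX (σ : A → List A) : Set (List A) :=
  {w | ∃ x ∈ Xsub σ, ∃ i : ℤ, seg x i w.length = w}

/-- The left shift `T`. -/
def shift (x : ℤ → A) : ℤ → A := fun k => x (k + 1)

/-- The power `T^i` of the left shift, `i ∈ ℤ`. -/
def shiftZ (i : ℤ) (x : ℤ → A) : ℤ → A := fun k => x (k + i)

/-- `(X_σ, T_σ)` has no periodic points. -/
def Aperiodic (σ : A → List A) : Prop :=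
  ∀ x ∈ Xsub σ, ∀ p : ℕ, 0 < p → shiftZ (p : ℤ) x ≠ x

/-- The coordinate at which the `n`-th block of the bi-infinite concatenation
`⋯ σ(x_{-1}).σ(x_0) σ(x_1) ⋯` starts (block `0` starts at coordinate `0`). -/
def blockStart (σ : B → List A) (x : ℤ → B) (n : ℤ) : ℤ :=
  if 0 ≤ n then ∑ j ∈ Finset.range n.toNat, ((σ (x (j : ℤ))).length : ℤ)
  else -∑ j ∈ Finset.range (-n).toNat, ((σ (x (-(j : ℤ) - 1))).length : ℤ)

/-- `y` is the image of the bi-infinite sequence `x` under the substitution `σ`,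
i.e. `y = ⋯ σ(x_{-1}).σ(x_0)σ(x_1)⋯` with `σ(x_0)` starting at coordinate `0`. -/
def IsSubstImage (σ : B → List A) (x : ℤ → B) (y : ℤ → A) : Prop :=
  ∀ n : ℤ, seg y (blockStart σ x n) (σ (x n)).length = σ (x n)

/-- `A_l`: the letters `a` with `|σ^n(a)| → ∞`. -/
def longLetters (σ : A → List A) : Set A :=
  {a | Tendsto (fun n => (substPow σ n a).length) atTop atTop}

/-- A minimal component of `(X_σ, T_σ)`: a nonempty closed shift-invariant subset of `X_σ`
that is minimal with respect to inclusion. -/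
def MinimalComponent [TopologicalSpace A] (σ : A → List A) (Z : Set (ℤ → A)) : Prop :=
  Z.Nonempty ∧ IsClosed Z ∧ Z ⊆ Xsub σ ∧ shift '' Z = Z ∧
    ∀ Z' : Set (ℤ → A), Z'.Nonempty → IsClosed Z' → Z' ⊆ Z → shift '' Z' = Z' → Z' = Z

/-- The element `T_σ^i σ^n([a])` of the Kakutani–Rokhlin partition `P_n`. -/
def piece (σ : A → List A) (n : ℕ) (a : A) (i : ℕ) : Set (ℤ → A) :=
  {x | ∃ y z : ℤ → A, y ∈ Xsub σ ∧ y 0 = a ∧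
    IsSubstImage (substPow σ n) y z ∧ x = shiftZ (i : ℤ) z}

/-- An `m`-primitive substitution, with respect to a decomposition
`A = P 0 ⊔ … ⊔ P (m-1) ⊔ A0`. -/
def IsMPrimitive (σ : A → List A) (m : ℕ) (P : Fin m → Set A) (A0 : Set A) : Prop :=
  (∀ i j : Fin m, i ≠ j → Disjoint (P i) (P j)) ∧
  (∀ i, Disjoint (P i) A0) ∧
  ((⋃ i, P i) ∪ A0 = Set.univ) ∧
  (∀ i, ∃ a ∈ P i, ∃ b ∈ P i, a ≠ b) ∧
  (∀ i, ∀ a ∈ P i, ∀ b ∈ σ a, b ∈ P i) ∧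
  (∀ i, ∀ a ∈ P i, ∀ b ∈ P i, ∃ n : ℕ, 1 ≤ n ∧ b ∈ substPow σ n a) ∧
  (∀ a : A, ∃ n : ℕ, 0 < n ∧ ∃ i, ∃ b ∈ P i, b ∈ substPow σ n a) ∧
  (∀ k : ℕ, 1 ≤ k → Lang (substPow σ k) = Lang σ) ∧
  (∀ a : A, [a] ∈ LangX σ)

/-- The set `Z_i` attached to the part `A_i = P i` of an `m`-primitive substitution. -/
def Zset (σ : A → List A) {m : ℕ} (P : Fin m → Set A) (i : Fin m) : Set (ℤ → A) :=
  {x | x ∈ Xsub σ ∧ ∀ n : ℕ, ∃ k : ℕ, 1 ≤ k ∧ ∃ a ∈ P i,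
    seg x (-(n : ℤ)) (2 * n + 1) <:+: substPow σ k a}

/-- The clopen set `W = ∪_i [r_i.l_i]` built from fixed points `w i`. -/
def Wset (σ : A → List A) {m : ℕ} (w : Fin m → ℤ → A) : Set (ℤ → A) :=
  ⋃ i : Fin m, {x | x ∈ Xsub σ ∧ x (-1) = w i (-1) ∧ x 0 = w i 0}

/-- A return word, given the letters `r i = w_i[-1]` and `l i = w_i[0]`. -/
def IsReturnWord (σ : A → List A) {m : ℕ} (r l : Fin m → A) (u : List A) : Prop :=
  u ∈ LangX σ ∧ u ≠ [] ∧ ∃ i j : Fin m,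
    (r i :: (u ++ [l j])) ∈ LangX σ ∧
    u.head? = some (l i) ∧ u.getLast? = some (r j) ∧
    ∀ t : Fin m, ¬ ([r t, l t] <:+: u)

/-- A proper substitution. -/
def IsProper (σ : A → List A) : Prop :=
  ∃ p : ℕ, 0 < p ∧ ∀ a : A,
    (∀ b c : A, [a, b] ∈ LangX σ → [a, c] ∈ LangX σ →
      (substPow σ p b).head? = (substPow σ p c).head?) ∧
    (∀ b c : A, [b, a] ∈ LangX σ → [c, a] ∈ LangX σ →
      (substPow σ p b).getLast? = (substPow σ p c).getLast?)

/-- Membership in the set `V` of words `v₁S₁v₂S₂v₃` with `v₁,v₂,v₃ ∈ A_l`, `S₁,S₂ ∈ A_s^*`. -/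
def Vcond (σ : A → List A) : A × List A × A × List A × A → Prop
  | (v1, S1, v2, S2, v3) =>
    v1 ∈ longLetters σ ∧ v2 ∈ longLetters σ ∧ v3 ∈ longLetters σ ∧
    (∀ c ∈ S1, c ∉ longLetters σ) ∧ (∀ c ∈ S2, c ∉ longLetters σ) ∧
    (v1 :: (S1 ++ v2 :: (S2 ++ [v3]))) ∈ LangX σ

/-- The cylinder set `[v₁S₁.v₂S₂v₃]`. -/
def Vbase (σ : A → List A) : A × List A × A × List A × A → Set (ℤ → A)
  | (v1, S1, v2, S2, v3) =>
    {x | x ∈ Xsub σ ∧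
      seg x (-(1 + S1.length : ℤ)) (v1 :: (S1 ++ v2 :: (S2 ++ [v3]))).length
        = v1 :: (S1 ++ v2 :: (S2 ++ [v3]))}

/-- The height `|σ^n(v₂S₂)|` of the tower over `[v₁S₁.v₂S₂v₃]` in `Ξ_n`. -/
def Vheight (σ : A → List A) (n : ℕ) : A × List A × A × List A × A → ℕ
  | (_, _, v2, S2, _) => (substWord (substPow σ n) (v2 :: S2)).length

/-- The element `T_σ^i σ^n([v₁S₁.v₂S₂v₃])` of the Kakutani–Rokhlin partition `Ξ_n`. -/
def Vpiece (σ : A → List A) (n : ℕ) (q : A × List A × A × List A × A) (i : ℕ) :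
    Set (ℤ → A) :=
  {x | ∃ y z : ℤ → A, y ∈ Vbase σ q ∧ IsSubstImage (substPow σ n) y z ∧
    x = shiftZ (i : ℤ) z}

/-- Membership in `Λ`. -/
def MemLambda (σ : A → List A) (s : ℕ → A × A) : Prop :=
  ∀ n : ℕ, [(s n).1, (s n).2] ∈ Lang σ ∧
    (σ (s (n + 1)).1).getLast? = some (s n).1 ∧
    (σ (s (n + 1)).2).head? = some (s n).2

/-- `x = w(s̄)` for `s̄ ∈ Λ`. -/
def IsLambdaPoint (σ : A → List A) (s : ℕ → A × A) (x : ℤ → A) : Prop :=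
  ∀ n : ℕ, seg x (-((substPow σ n (s n).1).length : ℤ))
      ((substPow σ n (s n).1).length + (substPow σ n (s n).2).length)
    = substPow σ n (s n).1 ++ substPow σ n (s n).2

/-- Membership in `M`: `i₀ = 0` and `a_j` occurs at position `i_{j+1}` of `σ(a_{j+1})`. -/
def MemM (σ : A → List A) (t : ℕ → A × ℕ) : Prop :=
  (t 0).2 = 0 ∧ ∀ j : ℕ, (σ (t (j + 1)).1)[(t (j + 1)).2]? = some (t j).1

/-- The cutting points `j_n` attached to an element of `M`. -/
def jSeq (σ : A → List A) (t : ℕ → A × ℕ) : ℕ → ℕ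
  | 0 => 0
  | n + 1 =>
      jSeq σ t n + (substWord (substPow σ n) ((σ (t (n + 1)).1).take (t (n + 1)).2)).length

/-- Membership in `M₀`: `j_n → ∞` and `|σ^n(a_n)| - j_n → ∞`. -/
def MZero (σ : A → List A) (t : ℕ → A × ℕ) : Prop :=
  MemM σ t ∧ ∀ N : ℕ, ∃ n0 : ℕ, ∀ n ≥ n0,
    N ≤ jSeq σ t n ∧ jSeq σ t n + N ≤ (substPow σ n (t n).1).length

/-- `x = w(m̄)` for `m̄ ∈ M₀`. -/
def IsMPoint (σ : A → List A) (t : ℕ → A × ℕ) (x : ℤ → A) : Prop :=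
  ∀ n : ℕ, seg x (-(jSeq σ t n : ℤ)) (substPow σ n (t n).1).length = substPow σ n (t n).1

section Substitution

variable (σ : A → List A)

theorem substIter_succ' (n : ℕ) (w : List A) :
    substIter σ (n + 1) w = (substIter σ n w).flatMap σ :=
  Function.iterate_succ_apply' _ _ _

@[simp] theorem substPow_zero (a : A) : substPow σ 0 a = [a] := rfl

theorem substIter_eq_flatMap (n : ℕ) (w : List A) :
    substIter σ n w = w.flatMap (substPow σ n) := by
  induction n generalizing w with
  | zero => exact (List.flatMap_singleton' w).symm
  | succ n ih =>
    rw [substIter_succ', ih, List.flatMap_assoc]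
    exact List.flatMap_congr fun a _ => (substIter_succ' σ n [a]).symm

theorem substIter_add (m n : ℕ) (w : List A) :
    substIter σ (m + n) w = substIter σ m (substIter σ n w) :=
  Function.iterate_add_apply _ _ _ _

theorem substPow_add (m n : ℕ) (a : A) :
    substPow σ (m + n) a = substIter σ m (substPow σ n a) :=
  substIter_add σ m n [a]

theorem substPow_succ (n : ℕ) (a : A) :
    substPow σ (n + 1) a = (σ a).flatMap (substPow σ n) := by
  rw [substPow, substIter, Function.iterate_succ_apply, ← substIter, substIter_eq_flatMap]
  simp [substWord]

@[simp] theorem substPow_one (a : A) : substPow σ 1 a = σ a := by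
  rw [substPow_succ]
  exact List.flatMap_singleton' _

theorem substIter_cons (n : ℕ) (a : A) (w : List A) :
    substIter σ n (a :: w) = substPow σ n a ++ substIter σ n w := by
  simp [substIter_eq_flatMap]

theorem substIter_append (n : ℕ) (u v : List A) :
    substIter σ n (u ++ v) = substIter σ n u ++ substIter σ n v := by
  simp only [substIter_eq_flatMap, List.flatMap_append]

theorem substIter_flatMap (n : ℕ) (l : List B) (g : B → List A) :
    substIter σ n (l.flatMap g) = l.flatMap fun b => substIter σ n (g b) := by
  simp only [substIter_eq_flatMap, List.flatMap_assoc]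

theorem length_substIter_le_mul {n K : ℕ} {w : List A}
    (h : ∀ c ∈ w, (substPow σ n c).length ≤ K) : (substIter σ n w).length ≤ w.length * K := by
  rw [substIter_eq_flatMap, List.length_flatMap]
  simpa using
    List.sum_le_card_nsmul (w.map fun c => (substPow σ n c).length) K (by simpa using h)

theorem length_le_length_substIter (hne : ∀ a, σ a ≠ []) (n : ℕ) (w : List A) :
    w.length ≤ (substIter σ n w).length := by
  induction n with
  | zero => rfl
  | succ n ih =>
    refine ih.trans ?_
    rw [substIter_succ', List.length_flatMap]
    simpa using List.length_le_sum_of_one_le ((substIter σ n w).map fun a => (σ a).length)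
      (by simp [Nat.one_le_iff_ne_zero, hne])

theorem substPow_reverse (n : ℕ) (a : A) :
    substPow (fun a => (σ a).reverse) n a = (substPow σ n a).reverse := by
  induction n generalizing a with
  | zero => rfl
  | succ n ih =>
    simp only [substPow_succ, List.reverse_flatMap]
    exact List.flatMap_congr fun b _ => ih b

theorem longLetters_reverse : longLetters (fun a => (σ a).reverse) = longLetters σ := by
  simp [longLetters, substPow_reverse]

theorem mem_Lang_reverse {w : List A} :
    w ∈ Lang (fun a => (σ a).reverse) ↔ w.reverse ∈ Lang σ := by
  change (∃ a n, 1 ≤ n ∧ w <:+: substPow _ n a) ↔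
    ∃ a n, 1 ≤ n ∧ w.reverse <:+: substPow σ n a
  simp_rw [substPow_reverse, ← List.reverse_infix (l₁ := w.reverse), List.reverse_reverse]

end Substitution

section Segments

theorem seg_eq_map (x : ℤ → A) (i : ℤ) (n : ℕ) :
    seg x i n = (List.range n).map fun k : ℕ => x (i + k) := by
  simp [seg, ← List.map_eq_flatMap]

theorem seg_length (x : ℤ → A) (i : ℤ) (n : ℕ) : (seg x i n).length = n := by
  simp [seg_eq_map]

theorem seg_add (x : ℤ → A) (i : ℤ) (m n : ℕ) :
    seg x i (m + n) = seg x i m ++ seg x (i + m) n := by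
  simp [seg_eq_map, List.range_add, add_assoc]

theorem seg_infix_seg (x : ℤ → A) {i j : ℤ} {n m : ℕ} (hji : j ≤ i)
    (hle : i + n ≤ j + m) :
    seg x i n <:+: seg x j m := by
  obtain ⟨a, rfl⟩ : ∃ a : ℕ, i = j + a := ⟨(i - j).toNat, by omega⟩
  obtain ⟨b, rfl⟩ : ∃ b : ℕ, m = a + n + b := ⟨m - a - n, by omega⟩
  rw [seg_add, seg_add]
  exact List.infix_append _ _ _

theorem seg_add_of_periodic {x : ℤ → A} {p : ℤ} (hx : Function.Periodic x p) (i : ℤ)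
    (n : ℕ) :
    seg x (i + p) n = seg x i n := by
  simp [seg_eq_map, add_right_comm _ p, hx _]

variable (σ : A → List A)

theorem LangX_subset_Lang : LangX σ ⊆ Lang σ := by
  rintro W ⟨x, hx, i, hW⟩
  rw [← hW]
  obtain ⟨a, n, hn, h⟩ := hx (W.length + i.natAbs)
  exact ⟨a, n, hn, (seg_infix_seg x (by omega) (by omega)).trans h⟩

end Segments

section ShortLetters

variable (σ : A → List A)

theorem notMem_longLetters_of_eventually_le {a : A} {C : ℕ}
    (h : ∀ᶠ m in atTop, (substPow σ m a).length ≤ C) : a ∉ longLetters σ := fun ha =>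
  ((ha.eventually_gt_atTop C).and h).exists.elim fun _ hm => hm.1.not_ge hm.2

theorem exists_forall_length_substPow_le [Finite A] (hne : ∀ a, σ a ≠ []) :
    ∃ K, ∀ a ∉ longLetters σ, ∀ m, (substPow σ m a).length ≤ K := by
  have hmono (a : A) : Monotone fun m => (substPow σ m a).length :=
    monotone_nat_of_le_succ fun m => by
      rw [add_comm, substPow_add]
      exact length_le_length_substIter σ hne 1 _
  have hbdd (a : {a // a ∉ longLetters σ}) : ∃ C, ∀ m, (substPow σ m a).length ≤ C := by
    by_contra! h
    exact a.2 (tendsto_atTop_atTop_of_monotone (hmono a) fun C => (h C).imp fun _ => le_of_lt)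
  choose C hC using hbdd
  obtain ⟨K, hK⟩ := Finite.bddAbove_range C
  exact ⟨K, fun a ha m => (hC ⟨a, ha⟩ m).trans (hK ⟨⟨a, ha⟩, rfl⟩)⟩

theorem notMem_longLetters_of_forall_mem_substPow {K : ℕ}
    (hK : ∀ a ∉ longLetters σ, ∀ m, (substPow σ m a).length ≤ K) {c : A} {j : ℕ}
    (h : ∀ e ∈ substPow σ j c, e ∉ longLetters σ) : c ∉ longLetters σ := by
  refine notMem_longLetters_of_eventually_le σ (C := (substPow σ j c).length * K) ?_
  filter_upwards [eventually_ge_atTop j] with m hm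
  obtain ⟨k, rfl⟩ := Nat.exists_eq_add_of_le' hm
  rw [substPow_add]
  exact length_substIter_le_mul σ fun e he => hK e (h e he) k

theorem notMem_longLetters_of_mem_substPow {K : ℕ}
    (hK : ∀ a ∉ longLetters σ, ∀ m, (substPow σ m a).length ≤ K) {c e : A} {i : ℕ}
    (hc : c ∉ longLetters σ) (he : e ∈ substPow σ i c) : e ∉ longLetters σ := by
  refine notMem_longLetters_of_eventually_le σ (C := K) (Eventually.of_forall fun m => ?_)
  calc (substPow σ m e).length ≤ (substIter σ m (substPow σ i c)).length := by
        rw [substIter_eq_flatMap]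
        exact (List.infix_flatMap_of_mem he _).length_le
    _ = (substPow σ (m + i) c).length := by rw [substPow_add]
    _ ≤ K := hK c hc _

end ShortLetters

section FlatMapFactors

variable {g : B → List A}

theorem exists_of_suffix_flatMap {l : List B} {W : List A} (hl : l ≠ [])
    (h : W <:+ l.flatMap g) :
    ∃ l₁ d l₂ s, l = l₁ ++ d :: l₂ ∧ s <:+ g d ∧ W = s ++ l₂.flatMap g := by
  induction l with
  | nil => exact absurd rfl hl
  | cons d₀ rest ih =>
    obtain ⟨t, ht⟩ := h
    rw [List.flatMap_cons] at ht
    rcases List.append_eq_append_iff.1 ht with ⟨s, hs, hW⟩ | ⟨t', -, hrest⟩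
    · exact ⟨[], d₀, rest, s, rfl, ⟨t, hs.symm⟩, hW⟩
    · rcases eq_or_ne rest [] with rfl | hne
      · simp only [List.flatMap_nil, List.nil_eq, List.append_eq_nil_iff] at hrest
        exact ⟨[], d₀, [], [], rfl, List.nil_suffix, by simp [hrest.2]⟩
      · obtain ⟨l₁, d, l₂, s, rfl, hs, hW⟩ := ih hne ⟨t', hrest.symm⟩
        exact ⟨d₀ :: l₁, d, l₂, s, rfl, hs, hW⟩

theorem exists_of_prefix_flatMap {l : List B} {W : List A} (hl : l ≠ [])
    (h : W <+: l.flatMap g) :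
    ∃ l₁ d l₂ w, l = l₁ ++ d :: l₂ ∧ w <+: g d ∧ W = l₁.flatMap g ++ w := by
  induction l generalizing W with
  | nil => exact absurd rfl hl
  | cons d₀ rest ih =>
    obtain ⟨t, ht⟩ := h
    rw [List.flatMap_cons] at ht
    rcases List.append_eq_append_iff.1 ht with ⟨t', hd₀, -⟩ | ⟨w', hW, hrest⟩
    · exact ⟨[], d₀, rest, W, rfl, ⟨t', hd₀.symm⟩, rfl⟩
    · rcases eq_or_ne rest [] with rfl | hne
      · exact ⟨[], d₀, [], g d₀, rfl, List.prefix_refl _, by simp_all⟩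
      · obtain ⟨l₁, d, l₂, w, rfl, hw, rfl⟩ := ih hne ⟨t, hrest.symm⟩
        exact ⟨d₀ :: l₁, d, l₂, w, rfl, hw, by simp [hW]⟩

theorem exists_of_infix_flatMap {l : List B} {W : List A} (hl : l ≠ [])
    (h : W <:+: l.flatMap g) :
    (∃ d ∈ l, W <:+: g d) ∨ ∃ (d d' : B) (mid : List B) (w₁ w₂ : List A),
      mid.Sublist l ∧ w₁ <:+ g d ∧ w₂ <+: g d' ∧ W = w₁ ++ mid.flatMap g ++ w₂ := by
  induction l with
  | nil => exact absurd rfl hl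
  | cons d₀ rest ih =>
    rw [List.flatMap_cons, List.infix_append_iff] at h
    rcases h with h | h | ⟨w₁, w₂, rfl, h₁, h₂⟩
    · exact Or.inl ⟨d₀, List.mem_cons_self, h⟩
    · rcases eq_or_ne rest [] with rfl | hne
      · exact Or.inl ⟨d₀, List.mem_cons_self, by simp_all⟩
      · rcases ih hne h with ⟨d, hd, hW⟩ | ⟨d, d', mid, w₁, w₂, hmid, hrest⟩
        · exact Or.inl ⟨d, List.mem_cons_of_mem _ hd, hW⟩
        · exact Or.inr ⟨d, d', mid, w₁, w₂, hmid.cons _, hrest⟩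
    · rcases eq_or_ne rest [] with rfl | hne
      · simp only [List.flatMap_nil, List.prefix_nil] at h₂
        exact Or.inl ⟨d₀, List.mem_cons_self, by simpa [h₂] using h₁.isInfix⟩
      · obtain ⟨mid, d', l₂, w, rfl, hw, rfl⟩ := exists_of_prefix_flatMap hne h₂
        refine Or.inr ⟨d₀, d', mid, w₁, w, ?_, h₁, hw, by simp⟩
        exact (List.sublist_append_left mid _).cons d₀

end FlatMapFactors

section ShortTails

variable (σ : A → List A)

def shortTailLetters (b : A) : Set A :=
  {c | ∃ q u, u ≠ [] ∧ (∀ d ∈ u, d ∉ longLetters σ) ∧ c :: u <:+ substPow σ q b}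

theorem cons_append_substIter_suffix_substPow {b c d : A} {u v : List A} {p q : ℕ}
    (hc : c :: u <:+ substPow σ q d) (hd : d :: v <:+ substPow σ p b) :
    c :: (u ++ substIter σ q v) <:+ substPow σ (q + p) b := by
  obtain ⟨s, hs⟩ := hd
  obtain ⟨t, ht⟩ := hc
  refine ⟨substIter σ q s ++ t, ?_⟩
  rw [substPow_add, ← hs, substIter_append, substIter_cons, ← ht]
  simp

theorem shortTailLetters_subset {K : ℕ}
    (hK : ∀ a ∉ longLetters σ, ∀ m, (substPow σ m a).length ≤ K) {b d : A} {v : List A} {p : ℕ}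
    (hv : ∀ e ∈ v, e ∉ longLetters σ) (hd : d :: v <:+ substPow σ p b) :
    shortTailLetters σ d ⊆ shortTailLetters σ b := by
  rintro c ⟨q, u, hu, hush, hc⟩
  refine ⟨q + p, u ++ substIter σ q v, by simp [hu], ?_,
    cons_append_substIter_suffix_substPow σ hc hd⟩
  simp only [List.mem_append, substIter_eq_flatMap, List.mem_flatMap]
  rintro e (he | ⟨f, hf, he⟩)
  exacts [hush e he, notMem_longLetters_of_mem_substPow σ hK (hv f hf) he]

theorem length_le_ncard_shortTailLetters [Finite A] (hne : ∀ a, σ a ≠ []) {K L : ℕ}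
    (hK : ∀ a ∉ longLetters σ, ∀ m, (substPow σ m a).length ≤ K) (hL : ∀ a, (σ a).length ≤ L)
    (hseed : ∀ c, c ∉ shortTailLetters σ c) {n : ℕ} {b : A} {W : List A}
    (hW : W <:+ substPow σ n b) (hsh : ∀ c ∈ W, c ∉ longLetters σ) :
    W.length ≤ 1 + (shortTailLetters σ b).ncard * (L * K) := by
  induction n generalizing b W with
  | zero =>
    have := hW.length_le
    simp only [substPow_zero, List.length_singleton] at this
    omega
  | succ n ih =>
    rw [substPow_succ] at hW
    obtain ⟨l₁, d, l₂, s, hb, hs, rfl⟩ := exists_of_suffix_flatMap (hne b) hW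
    have hl₂ : ∀ e ∈ l₂, e ∉ longLetters σ := fun e he =>
      notMem_longLetters_of_forall_mem_substPow σ hK fun f hf =>
        hsh f (List.mem_append_right _ (List.mem_flatMap.2 ⟨e, he, hf⟩))
    have hdb : d :: l₂ <:+ substPow σ 1 b := ⟨l₁, by rw [substPow_one, hb]⟩
    have hsub := shortTailLetters_subset σ hK hl₂ hdb
    have hs_len := ih hs fun c hc => hsh c (List.mem_append_left _ hc)
    rw [List.length_append, ← substIter_eq_flatMap]
    rcases eq_or_ne l₂ [] with rfl | hl₂_ne
    · simpa [substIter_eq_flatMap] using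
        hs_len.trans (Nat.add_le_add_left (Nat.mul_le_mul_right _ (Set.ncard_le_ncard hsub)) 1)
    have hlt : (shortTailLetters σ d).ncard < (shortTailLetters σ b).ncard :=
      Set.ncard_lt_ncard ((Set.ssubset_iff_of_subset hsub).2
        ⟨d, ⟨1, l₂, hl₂_ne, hl₂, hdb⟩, hseed d⟩)
    have hl₂_len : l₂.length ≤ L := by
      have := hL b
      rw [hb, List.length_append, List.length_cons] at this
      omega
    have hmid := length_substIter_le_mul σ fun e he => hK e (hl₂ e he) n
    calc s.length + (substIter σ n l₂).length
        ≤ 1 + (shortTailLetters σ d).ncard * (L * K) + L * K := by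
          gcongr
          exact hmid.trans (Nat.mul_le_mul_right K hl₂_len)
      _ = 1 + ((shortTailLetters σ d).ncard + 1) * (L * K) := by ring
      _ ≤ 1 + (shortTailLetters σ b).ncard * (L * K) := by gcongr; exact hlt

end ShortTails

section Powers

theorem exists_iterate_add_eq_of_finite {α : Type*} {τ : α → α} {x : α} {S : Set α}
    (hS : S.Finite) (h : ∀ i, τ^[i] x ∈ S) :
    ∃ N p, 0 < p ∧ ∀ i ≥ N, τ^[i + p] x = τ^[i] x := by
  obtain ⟨a, b, hab, heq⟩ := Set.Finite.exists_lt_map_eq_of_forall_mem h hS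
  refine ⟨a, b - a, by omega, fun i hi => ?_⟩
  obtain ⟨j, rfl⟩ := Nat.exists_eq_add_of_le' hi
  rw [show j + a + (b - a) = j + b by omega, Function.iterate_add_apply,
    Function.iterate_add_apply, heq]

theorem flatMap_range_add_mul {f : ℕ → List A} {N p : ℕ} (hf : ∀ i ≥ N, f (i + p) = f i)
    (k : ℕ) : (List.range (N + p * k)).flatMap f =
      (List.range N).flatMap f ++
        (List.replicate k ((List.range p).flatMap (f <| N + ·))).flatten := by
  have hper : ∀ k, ∀ i ≥ N, f (i + p * k) = f i := by
    intro k
    induction k with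
    | zero => simp
    | succ k ih => intro i hi; rw [mul_add_one, ← add_assoc, hf _ (by omega), ih i hi]
  induction k with
  | zero => simp
  | succ k ih =>
    have hblock :
        (List.range p).flatMap (f <| N + p * k + ·) = (List.range p).flatMap (f <| N + ·) :=
      List.flatMap_congr fun s _ => by rw [add_right_comm, hper k _ (by omega)]
    rw [mul_add_one, ← add_assoc, List.range_add, List.flatMap_append, ih, List.flatMap_map]
    simp [hblock, List.replicate_succ']

def HasBoundedPowers (σ : A → List A) : Prop :=
  ∀ D : List A, D ≠ [] → ∃ k, (List.replicate k D).flatten ∉ Lang σ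

variable {σ : A → List A}

theorem cons_flatMap_iterate_suffix_substPow {c : A} {q : ℕ} {u : List A}
    (h : c :: u <:+ substPow σ q c) (k : ℕ) :
    c :: (List.range k).flatMap (fun i => (substIter σ q)^[i] u) <:+ substPow σ (q * k) c := by
  induction k with
  | zero => simp
  | succ k ih =>
    convert cons_append_substIter_suffix_substPow σ h ih using 2
    · rw [List.range_succ_eq_map, List.flatMap_cons, List.flatMap_map, substIter_flatMap]
      simp only [Function.iterate_succ_apply']
      rfl
    · ring

theorem HasBoundedPowers.notMem_shortTailLetters_self [Finite A] (hb : HasBoundedPowers σ)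
    (hne : ∀ a, σ a ≠ []) {K : ℕ} (hK : ∀ a ∉ longLetters σ, ∀ m, (substPow σ m a).length ≤ K)
    (c : A) : c ∉ shortTailLetters σ c := by
  rintro ⟨q, u, hu, hush, hc⟩
  have hq : q ≠ 0 := by
    rintro rfl
    exact hu (by simpa using hc.length_le)
  have hiter (i : ℕ) : (substIter σ q)^[i] u = substIter σ (q * i) u :=
    (congrFun (Function.iterate_mul _ q i) u).symm
  obtain ⟨N, p, hp, hper⟩ :=
    exists_iterate_add_eq_of_finite (List.finite_length_le A (u.length * K)) fun i => by
      change List.length _ ≤ _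
      rw [hiter]
      exact length_substIter_le_mul σ fun d hd => hK d (hush d hd) _
  set D := (List.range p).flatMap fun s => (substIter σ q)^[N + 1 + s] u
  have hD : D ≠ [] := by
    obtain ⟨p, rfl⟩ := Nat.exists_eq_add_of_lt hp
    rw [List.ne_nil_iff_length_pos]
    simp only [D, List.range_succ_eq_map, List.flatMap_cons, List.length_append, hiter]
    have := length_le_length_substIter σ hne (q * (N + 1 + 0)) u
    have := List.length_pos_iff.2 hu
    omega
  obtain ⟨k, hk⟩ := hb D hD
  refine hk ⟨c, q * (N + 1 + p * k), Nat.one_le_iff_ne_zero.2 (mul_ne_zero hq (by omega)), ?_⟩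
  have := cons_flatMap_iterate_suffix_substPow hc (N + 1 + p * k)
  rw [flatMap_range_add_mul (fun i hi => hper i (by omega))] at this
  exact ((List.suffix_append (c :: _) _).trans this).isInfix

end Powers

section Aperiodic

variable {σ : A → List A}

theorem mem_Lang_of_infix {w v : List A} (h : w <:+: v) (hv : v ∈ Lang σ) : w ∈ Lang σ :=
  let ⟨a, n, hn, hv⟩ := hv
  ⟨a, n, hn, h.trans hv⟩

theorem Aperiodic.hasBoundedPowers (hap : Aperiodic σ) : HasBoundedPowers σ := by
  intro D hD
  by_contra! hpow
  set L := D.length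
  have hL : 0 < L := List.length_pos_iff.2 hD
  have hidx (i : ℤ) : (i % L).toNat < L := by
    have := Int.emod_nonneg i (by omega : (L : ℤ) ≠ 0)
    have := Int.emod_lt_of_pos i (by omega : (0 : ℤ) < L)
    omega
  let x : ℤ → A := fun i => D[(i % L).toNat]'(hidx i)
  have hx : Function.Periodic x L := fun i => by simp [x]
  have hseg_one : seg x 0 L = D := List.ext_getElem (seg_length x 0 L) fun j hj _ => by
    simp [seg_eq_map, x, Int.emod_eq_of_lt (Int.natCast_nonneg j) (by omega : (j : ℤ) < L)]
  have hseg_pow (k : ℕ) : seg x 0 (k * L) = (List.replicate k D).flatten := by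
    induction k with
    | zero => simp [seg_eq_map]
    | succ k ih =>
      rw [add_one_mul, add_comm, seg_add, hseg_one, zero_add, ← zero_add (L : ℤ),
        seg_add_of_periodic hx, ih, List.replicate_succ, List.flatten_cons]
  have hseg (i : ℤ) (n : ℕ) : seg x i n ∈ Lang σ := by
    rw [← Int.emod_add_ediv_mul i L, seg_add_of_periodic (by simpa using hx.int_mul (i / L))]
    refine mem_Lang_of_infix (seg_infix_seg x (j := 0) (m := (n + 1) * L) ?_ ?_) ?_
    · exact Int.emod_nonneg i (by omega)
    · have := Int.emod_lt_of_pos i (by omega : (0 : ℤ) < L)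
      push_cast
      nlinarith
    · exact hseg_pow (n + 1) ▸ hpow (n + 1)
  exact hap x (fun n => hseg _ _) L hL (funext hx)

theorem HasBoundedPowers.reverse (hb : HasBoundedPowers σ) :
    HasBoundedPowers fun a => (σ a).reverse := by
  intro D hD
  obtain ⟨k, hk⟩ := hb D.reverse (by simpa using hD)
  refine ⟨k, fun hmem => hk ?_⟩
  rw [mem_Lang_reverse] at hmem
  simpa [List.reverse_flatten] using hmem

end Aperiodic

section Bounds

variable {σ : A → List A} {K L : ℕ}

theorem HasBoundedPowers.length_le_of_suffix_substPow [Finite A] (hb : HasBoundedPowers σ)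
    (hne : ∀ a, σ a ≠ []) (hK : ∀ a ∉ longLetters σ, ∀ m, (substPow σ m a).length ≤ K)
    (hL : ∀ a, (σ a).length ≤ L) {n : ℕ} {b : A} {W : List A} (hW : W <:+ substPow σ n b)
    (hsh : ∀ c ∈ W, c ∉ longLetters σ) : W.length ≤ 1 + Nat.card A * (L * K) :=
  (length_le_ncard_shortTailLetters σ hne hK hL (hb.notMem_shortTailLetters_self hne hK) hW
    hsh).trans (by gcongr; exact Set.ncard_le_card _)

theorem HasBoundedPowers.length_le_of_prefix_substPow [Finite A] (hb : HasBoundedPowers σ)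
    (hne : ∀ a, σ a ≠ []) (hK : ∀ a ∉ longLetters σ, ∀ m, (substPow σ m a).length ≤ K)
    (hL : ∀ a, (σ a).length ≤ L) {n : ℕ} {b : A} {W : List A} (hW : W <+: substPow σ n b)
    (hsh : ∀ c ∈ W, c ∉ longLetters σ) : W.length ≤ 1 + Nat.card A * (L * K) := by
  rw [← List.length_reverse]
  refine hb.reverse.length_le_of_suffix_substPow (by simpa using hne) ?_ (by simpa using hL)
    (by rwa [substPow_reverse, List.reverse_suffix]) (by simpa [longLetters_reverse] using hsh)
  simpa [longLetters_reverse, substPow_reverse] using hK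

theorem length_le_of_infix_substPow (hne : ∀ a, σ a ≠ [])
    (hK : ∀ a ∉ longLetters σ, ∀ m, (substPow σ m a).length ≤ K) (hL : ∀ a, (σ a).length ≤ L)
    {C : ℕ} (hsuf : ∀ m b s, s <:+ substPow σ m b → (∀ c ∈ s, c ∉ longLetters σ) → s.length ≤ C)
    (hpre : ∀ m b s, s <+: substPow σ m b → (∀ c ∈ s, c ∉ longLetters σ) → s.length ≤ C)
    {n : ℕ} {a : A} {W : List A} (hW : W <:+: substPow σ n a)
    (hsh : ∀ c ∈ W, c ∉ longLetters σ) : W.length ≤ 2 * C + L * K + 1 := by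
  induction n generalizing a with
  | zero =>
    have := hW.length_le
    simp only [substPow_zero, List.length_singleton] at this
    omega
  | succ n ih =>
    rw [substPow_succ] at hW
    rcases exists_of_infix_flatMap (hne a) hW with
      ⟨d, -, hd⟩ | ⟨d, d', mid, w₁, w₂, hmid, h₁, h₂, rfl⟩
    · exact ih hd
    have hmid_short : ∀ e ∈ mid, e ∉ longLetters σ := fun e he =>
      notMem_longLetters_of_forall_mem_substPow σ hK fun f hf =>
        hsh f (List.mem_append_left _ (List.mem_append_right _ (List.mem_flatMap.2 ⟨e, he, hf⟩)))
    have hmid_len : (substIter σ n mid).length ≤ L * K :=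
      (length_substIter_le_mul σ fun e he => hK e (hmid_short e he) n).trans
        (Nat.mul_le_mul_right K (hmid.length_le.trans (hL a)))
    have := hsuf n d w₁ h₁ fun c hc => hsh c (by simp [hc])
    have := hpre n d' w₂ h₂ fun c hc => hsh c (by simp [hc])
    simp only [List.length_append, ← substIter_eq_flatMap]
    omega

end Bounds

theorem long_letter_in_long_words_general
    {A : Type*} [Fintype A] (σ : A → List A) (hne : ∀ a, σ a ≠ [])
    (hap : Aperiodic σ) :
    ∃ M : ℕ, 0 < M ∧ ∀ W ∈ LangX σ, M ≤ W.length → ∃ a ∈ longLetters σ, a ∈ W := by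
  obtain ⟨K, hK⟩ := exists_forall_length_substPow_le σ hne
  obtain ⟨L, hL⟩ := Finite.bddAbove_range fun a => (σ a).length
  have hL' (a : A) : (σ a).length ≤ L := hL ⟨a, rfl⟩
  have hb := hap.hasBoundedPowers
  refine ⟨2 * (1 + Nat.card A * (L * K)) + L * K + 2, by omega, fun W hW hlen => ?_⟩
  by_contra! hshort
  obtain ⟨a, n, -, hWa⟩ := LangX_subset_Lang σ hW
  have := length_le_of_infix_substPow hne hK hL'
    (fun _ _ _ => hb.length_le_of_suffix_substPow hne hK hL')
    (fun _ _ _ => hb.length_le_of_prefix_substPow hne hK hL') hWa fun c hc hl => hshort c hl hc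
  omega

/-- For an aperiodic substitution there is `M > 0` such that every word
`W ∈ L(X_σ)` with `|W| ≥ M` contains a letter from `A_l`. -/
theorem long_letter_in_long_words
    {A : Type*} [Fintype A] (σ : A → List A) (hne : ∀ a, σ a ≠ [])
    (hunc : ¬ (Xsub σ).Countable) (hap : Aperiodic σ) :
    ∃ M : ℕ, 0 < M ∧ ∀ W ∈ LangX σ, M ≤ W.length → ∃ a ∈ longLetters σ, a ∈ W :=
  long_letter_in_long_words_general σ hne hap

end PaperStmt
end

section
/- Let σ : A → A^+ be a substitution with |σ^n(a)| → ∞ as n → ∞ for every a ∈ A. Then the set {w(s̄) : s̄ ∈ Λ} is finite. -/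
/-!
Since `A` is finite and every `|σ^n(a)| → ∞`, for `n` large the pair `s̄ n = (a_n, b_n)` alone
fixes `w(s̄)` on the window `[-|σ^n(a_n)|, |σ^n(b_n)|)`, which contains any prescribed finite set
of coordinates. So on every finite set of coordinates the points `w(s̄)` take at most `|A|²`
values, and a set of sequences with that property has at most `|A|²` elements.
-/

open Filter Topology

namespace PaperStmt

variable {A : Type*} {B : Type*}

theorem exists_finset_restrict_injOn {ι β : Type*} (t : Finset (ι → β)) :
    ∃ F : Finset ι, Set.InjOn F.restrict (t : Set (ι → β)) := by
  classical
  have hsep : ∀ p : (ι → β) × (ι → β), p.1 ≠ p.2 → ∃ i, p.1 i ≠ p.2 i :=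
    fun p h => Function.ne_iff.mp h
  refine ⟨(t ×ˢ t).biUnion fun p => if h : p.1 ≠ p.2 then {(hsep p h).choose} else ∅, ?_⟩
  intro x hx y hy hxy
  by_contra hne
  have hmem : (hsep (x, y) hne).choose ∈
      (t ×ˢ t).biUnion fun p => if h : p.1 ≠ p.2 then {(hsep p h).choose} else ∅ :=
    Finset.mem_biUnion.mpr ⟨(x, y), Finset.mem_product.mpr ⟨hx, hy⟩, by simp [hne]⟩
  exact (hsep (x, y) hne).choose_spec (congrFun hxy ⟨_, hmem⟩)

theorem finite_of_forall_restrict_mem_range {ι β γ : Type*} [Fintype γ] {S : Set (ι → β)}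
    (h : ∀ F : Finset ι, ∃ g : γ → F → β, ∀ x ∈ S, F.restrict x ∈ Set.range g) :
    S.Finite := by
  classical
  by_contra hinf
  obtain ⟨t, htS, htcard⟩ := Set.Infinite.exists_subset_card_eq hinf (Fintype.card γ + 1)
  obtain ⟨F, hinj⟩ := exists_finset_restrict_injOn t
  obtain ⟨g, hg⟩ := h F
  have hmaps : ∀ x ∈ t, F.restrict x ∈ Finset.univ.image g := fun x hx => by
    obtain ⟨c, hc⟩ := hg x (htS hx)
    exact Finset.mem_image.mpr ⟨c, Finset.mem_univ c, hc⟩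
  have := (Finset.card_le_card_of_injOn _ hmaps hinj).trans Finset.card_image_le
  rw [htcard, Finset.card_univ] at this
  omega

theorem getElem?_seg {x : ℤ → A} {i : ℤ} {len j : ℕ} (hj : j < len) :
    (seg x i len)[j]? = some (x (i + j)) := by
  -- `seg` casts `List.range len` to `List ℤ` through the list monad
  simp only [seg, List.bind_eq_flatMap, List.pure_def, ← List.map_eq_flatMap]
  simp [hj]

theorem IsLambdaPoint.getElem?_eq {σ : A → List A} {s : ℕ → A × A} {x : ℤ → A}
    (hx : IsLambdaPoint σ s x) (n : ℕ) {k : ℤ}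
    (hlo : -((substPow σ n (s n).1).length : ℤ) ≤ k)
    (hhi : k < (substPow σ n (s n).2).length) :
    (substPow σ n (s n).1 ++ substPow σ n (s n).2)[(k + (substPow σ n (s n).1).length).toNat]?
      = some (x k) := by
  rw [← hx n, getElem?_seg (by omega)]
  congr 2
  omega

theorem eventually_forall_le_length_substPow [Finite A] {σ : A → List A}
    (hlen : ∀ a : A, Tendsto (fun n => (substPow σ n a).length) atTop atTop) (R : ℕ) :
    ∀ᶠ n in atTop, ∀ a : A, R ≤ (substPow σ n a).length :=
  eventually_all.mpr fun a => (hlen a).eventually_ge_atTop R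

theorem lambda_points_finite_general
    {A : Type*} [Fintype A] (σ : A → List A)
    (hlen : ∀ a : A, Filter.Tendsto (fun n => (substPow σ n a).length)
      Filter.atTop Filter.atTop) :
    {x : ℤ → A | ∃ s : ℕ → A × A, MemLambda σ s ∧ IsLambdaPoint σ s x}.Finite := by
  refine finite_of_forall_restrict_mem_range (γ := A × A) fun F => ?_
  set R := F.sup Int.natAbs + 1
  have hF : ∀ k ∈ F, -(R : ℤ) ≤ k ∧ k < R := fun k hk => by
    have := Finset.le_sup (f := Int.natAbs) hk
    omega
  obtain ⟨n, hn⟩ := (eventually_forall_le_length_substPow hlen R).exists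
  refine ⟨fun p k => ((substPow σ n p.1 ++ substPow σ n p.2)[
    ((k : ℤ) + (substPow σ n p.1).length).toNat]?).getD p.1, ?_⟩
  rintro x ⟨s, -, hs⟩
  refine ⟨s n, funext fun k => ?_⟩
  obtain ⟨hlo, hhi⟩ := hF k k.2
  have h1 := hn (s n).1
  have h2 := hn (s n).2
  simp only [Finset.restrict, hs.getElem?_eq n (k := k) (by omega) (by omega), Option.getD_some]

/-- If `|σ^n(a)| → ∞` for every letter `a`, then the set
`{w(s̄) : s̄ ∈ Λ}` is finite. -/
theorem lambda_points_finite
    {A : Type*} [Fintype A] (σ : A → List A) (hne : ∀ a, σ a ≠ [])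
    (hunc : ¬ (Xsub σ).Countable)
    (hlen : ∀ a : A, Filter.Tendsto (fun n => (substPow σ n a).length)
      Filter.atTop Filter.atTop) :
    {x : ℤ → A | ∃ s : ℕ → A × A, MemLambda σ s ∧ IsLambdaPoint σ s x}.Finite :=
  lambda_points_finite_general σ hlen

end PaperStmt
end
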